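/- If the classical first-order theory of one binary predicate is undecidable, and there is a computable, truth-preserving two-way reduction φ ↦ φ* into the monadic fragment of a modal predicate logic L with QK ⊆ L ⊆ QS5 (Kripke's trick), then the monadic fragment of L is undecidable. -/

import Mathlib

/-- Classical first-order formulas over a single binary predicate `P`. -/
inductive FOF : Type
  | atom : ℕ → ℕ → FOF
  | fls : FOF
  | neg : FOF → FOF
  | imp : FOF → FOF → FOF
  | and : FOF → FOF → FOF
  | or : FOF → FOF → FOF
  | all : ℕ → FOF → FOF
  | ex : ℕ → FOF → FOF

/-- Classical satisfaction in a structure `(D, R)` under assignment `σ`. -/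
def FOSat {D : Type} (R : D → D → Prop) : (ℕ → D) → FOF → Prop
  | σ, .atom x y => R (σ x) (σ y)
  | _, .fls => False
  | σ, .neg φ => ¬ FOSat R σ φ
  | σ, .imp φ ψ => FOSat R σ φ → FOSat R σ ψ
  | σ, .and φ ψ => FOSat R σ φ ∧ FOSat R σ ψ
  | σ, .or φ ψ => FOSat R σ φ ∨ FOSat R σ ψ
  | σ, .all x φ => ∀ d : D, FOSat R (Function.update σ x d) φ
  | σ, .ex x φ => ∃ d : D, FOSat R (Function.update σ x d) φ

/-- Classical validity. -/
def FOValid (φ : FOF) : Prop :=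
  ∀ (D : Type) (_ : Nonempty D) (R : D → D → Prop) (σ : ℕ → D), FOSat R σ φ

/-- Monadic modal formulas: countably many unary predicate letters. -/
inductive MFor : Type
  | pred : ℕ → ℕ → MFor
  | fls : MFor
  | neg : MFor → MFor
  | imp : MFor → MFor → MFor
  | and : MFor → MFor → MFor
  | or : MFor → MFor → MFor
  | box : MFor → MFor
  | dia : MFor → MFor
  | all : ℕ → MFor → MFor
  | ex : ℕ → MFor → MFor

/-- Kripke satisfaction over an arbitrary frame `(W, Rel)` with constant domain. -/
def MSatK {W D : Type} (Rel : W → W → Prop) (V : ℕ → W → D → Prop) :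
    W → (ℕ → D) → MFor → Prop
  | w, σ, .pred i x => V i w (σ x)
  | _, _, .fls => False
  | w, σ, .neg φ => ¬ MSatK Rel V w σ φ
  | w, σ, .imp φ ψ => MSatK Rel V w σ φ → MSatK Rel V w σ ψ
  | w, σ, .and φ ψ => MSatK Rel V w σ φ ∧ MSatK Rel V w σ ψ
  | w, σ, .or φ ψ => MSatK Rel V w σ φ ∨ MSatK Rel V w σ ψ
  | w, σ, .box φ => ∀ v, Rel w v → MSatK Rel V v σ φ
  | w, σ, .dia φ => ∃ v, Rel w v ∧ MSatK Rel V v σ φ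
  | w, σ, .all x φ => ∀ d, MSatK Rel V w (Function.update σ x d) φ
  | w, σ, .ex x φ => ∃ d, MSatK Rel V w (Function.update σ x d) φ

/-- `QK`-validity: truth in all Kripke models. -/
def QKValid (ψ : MFor) : Prop :=
  ∀ (W D : Type) (_ : Nonempty W) (_ : Nonempty D) (Rel : W → W → Prop)
    (V : ℕ → W → D → Prop) (w : W) (σ : ℕ → D), MSatK Rel V w σ ψ

/-- `QS5`-validity: truth in all Kripke models with universal accessibility. -/
def QS5Valid (ψ : MFor) : Prop :=
  ∀ (W D : Type) (_ : Nonempty W) (_ : Nonempty D)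
    (V : ℕ → W → D → Prop) (w : W) (σ : ℕ → D),
    MSatK (fun _ _ => True) V w σ ψ

/-- Numerical coding of first-order formulas. -/
def encodeFOF : FOF → ℕ
  | .atom x y => Nat.pair 0 (Nat.pair x y)
  | .fls => Nat.pair 1 0
  | .neg φ => Nat.pair 2 (encodeFOF φ)
  | .imp φ ψ => Nat.pair 3 (Nat.pair (encodeFOF φ) (encodeFOF ψ))
  | .and φ ψ => Nat.pair 4 (Nat.pair (encodeFOF φ) (encodeFOF ψ))
  | .or φ ψ => Nat.pair 5 (Nat.pair (encodeFOF φ) (encodeFOF ψ))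
  | .all x φ => Nat.pair 6 (Nat.pair x (encodeFOF φ))
  | .ex x φ => Nat.pair 7 (Nat.pair x (encodeFOF φ))

/-- Numerical coding of monadic modal formulas. -/
def encodeMFor : MFor → ℕ
  | .pred p x => Nat.pair 0 (Nat.pair p x)
  | .fls => Nat.pair 1 0
  | .neg φ => Nat.pair 2 (encodeMFor φ)
  | .imp φ ψ => Nat.pair 3 (Nat.pair (encodeMFor φ) (encodeMFor ψ))
  | .and φ ψ => Nat.pair 4 (Nat.pair (encodeMFor φ) (encodeMFor ψ))
  | .or φ ψ => Nat.pair 5 (Nat.pair (encodeMFor φ) (encodeMFor ψ))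
  | .box φ => Nat.pair 6 (encodeMFor φ)
  | .dia φ => Nat.pair 7 (encodeMFor φ)
  | .all x φ => Nat.pair 8 (Nat.pair x (encodeMFor φ))
  | .ex x φ => Nat.pair 9 (Nat.pair x (encodeMFor φ))

lemma right_lt_pair {t : ℕ} (p : ℕ) (ht : 0 < t) : p < Nat.pair t p :=
  lt_of_le_of_lt (Nat.right_le_pair 0 p) (Nat.pair_lt_pair_left p ht)

/-- Recognizer for the range of `encodeFOF`. -/
def isCode (n : ℕ) : Bool :=
  if n.unpair.1 = 0 then true
  else if n.unpair.1 = 1 then n.unpair.2 = 0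
  else if n.unpair.1 = 2 then isCode n.unpair.2
  else if n.unpair.1 = 3 ∨ n.unpair.1 = 4 ∨ n.unpair.1 = 5 then
    isCode n.unpair.2.unpair.1 && isCode n.unpair.2.unpair.2
  else if n.unpair.1 = 6 ∨ n.unpair.1 = 7 then isCode n.unpair.2.unpair.2
  else false
decreasing_by
  all_goals
    have hp : n.unpair.2 < n := by
      calc n.unpair.2 < Nat.pair n.unpair.1 n.unpair.2 := right_lt_pair _ (by omega)
        _ = n := Nat.pair_unpair n
  · exact hp
  · exact lt_of_le_of_lt (Nat.unpair_left_le _) hp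
  · exact lt_of_le_of_lt (Nat.unpair_right_le _) hp
  · exact lt_of_le_of_lt (Nat.unpair_right_le _) hp

theorem isCode_encode (φ : FOF) : isCode (encodeFOF φ) = true := by
  induction φ <;> rw [isCode] <;> simp_all [encodeFOF, Nat.unpair_pair]

theorem isCode_iff (n : ℕ) : isCode n = true ↔ ∃ φ : FOF, encodeFOF φ = n := by
  constructor
  · induction n using Nat.strong_induction_on with
    | _ n ih =>
      rw [isCode]
      have hn : Nat.pair n.unpair.1 n.unpair.2 = n := Nat.pair_unpair n
      have hp : n.unpair.1 ≠ 0 → n.unpair.2 < n := fun h => by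
        calc n.unpair.2 < Nat.pair n.unpair.1 n.unpair.2 := right_lt_pair _ (by omega)
          _ = n := hn
      split_ifs with h0 h1 h2 h345 h67 <;> intro h
      · exact ⟨.atom n.unpair.2.unpair.1 n.unpair.2.unpair.2, by
          simp [encodeFOF, Nat.pair_unpair, ← h0, hn]⟩
      · exact ⟨.fls, by
          simp only [encodeFOF, ← h1]
          have h' : n.unpair.2 = 0 := by simpa using h
          rw [show (0:ℕ) = n.unpair.2 from h'.symm, hn]⟩
      · obtain ⟨φ, hφ⟩ := ih _ (hp (by omega)) h
        exact ⟨.neg φ, by simp [encodeFOF, hφ, ← h2, hn]⟩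
      · rw [Bool.and_eq_true] at h
        obtain ⟨φ, hφ⟩ := ih _ (lt_of_le_of_lt (Nat.unpair_left_le _) (hp (by omega))) h.1
        obtain ⟨ψ, hψ⟩ := ih _ (lt_of_le_of_lt (Nat.unpair_right_le _) (hp (by omega))) h.2
        rcases h345 with h' | h' | h'
        · exact ⟨.imp φ ψ, by simp [encodeFOF, hφ, hψ, Nat.pair_unpair, ← h', hn]⟩
        · exact ⟨.and φ ψ, by simp [encodeFOF, hφ, hψ, Nat.pair_unpair, ← h', hn]⟩
        · exact ⟨.or φ ψ, by simp [encodeFOF, hφ, hψ, Nat.pair_unpair, ← h', hn]⟩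
      · obtain ⟨φ, hφ⟩ := ih _ (lt_of_le_of_lt (Nat.unpair_right_le _) (hp (by omega))) h
        rcases h67 with h' | h'
        · exact ⟨.all n.unpair.2.unpair.1 φ, by
            simp [encodeFOF, hφ, Nat.pair_unpair, ← h', hn]⟩
        · exact ⟨.ex n.unpair.2.unpair.1 φ, by
            simp [encodeFOF, hφ, Nat.pair_unpair, ← h', hn]⟩
      · exact absurd h (by simp)
  · rintro ⟨φ, rfl⟩
    exact isCode_encode φ

/-- The step function computing `isCode n` from the list of previous values. -/
def isCodeStep : Unit → List Bool → Option Bool := fun _ l =>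
  if l.length.unpair.1 = 0 then some true
  else if l.length.unpair.1 = 1 then some (decide (l.length.unpair.2 = 0))
  else if l.length.unpair.1 = 2 then l[l.length.unpair.2]?
  else if l.length.unpair.1 = 3 ∨ l.length.unpair.1 = 4 ∨ l.length.unpair.1 = 5 then
    l[l.length.unpair.2.unpair.1]?.bind fun a =>
      l[l.length.unpair.2.unpair.2]?.map fun b => a && b
  else if l.length.unpair.1 = 6 ∨ l.length.unpair.1 = 7 then
    l[l.length.unpair.2.unpair.2]?
  else some false

theorem isCodeStep_spec (a : Unit) (n : ℕ) :
    isCodeStep a ((List.range n).map isCode) = some (isCode n) := by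
  have hlen : ((List.range n).map isCode).length = n := by simp
  have hget : ∀ k, k < n → ((List.range n).map isCode)[k]? = some (isCode k) := by
    intro k hk
    simp [hk]
  have hp : n.unpair.1 ≠ 0 → n.unpair.2 < n := fun h => by
    calc n.unpair.2 < Nat.pair n.unpair.1 n.unpair.2 := right_lt_pair _ (by omega)
      _ = n := Nat.pair_unpair n
  rw [isCodeStep]
  simp only [hlen]
  conv_rhs => rw [isCode]
  split_ifs with h0 h1 h2 h345 h67
  · rfl
  · rfl
  · exact hget _ (hp (by omega))
  · rw [hget _ (lt_of_le_of_lt (Nat.unpair_left_le _) (hp (by omega))),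
      hget _ (lt_of_le_of_lt (Nat.unpair_right_le _) (hp (by omega)))]
    rfl
  · exact hget _ (lt_of_le_of_lt (Nat.unpair_right_le _) (hp (by omega)))
  · rfl

theorem isCodeStep_primrec : Primrec₂ isCodeStep := by
  have hl : Primrec fun q : Unit × List Bool => q.2 := Primrec.snd
  have hn : Primrec fun q : Unit × List Bool => q.2.length := Primrec.list_length.comp hl
  have hu : Primrec fun q : Unit × List Bool => q.2.length.unpair :=
    Primrec.unpair.comp hn
  have ht : Primrec fun q : Unit × List Bool => q.2.length.unpair.1 := Primrec.fst.comp hu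
  have hp : Primrec fun q : Unit × List Bool => q.2.length.unpair.2 := Primrec.snd.comp hu
  have hp1 : Primrec fun q : Unit × List Bool => q.2.length.unpair.2.unpair.1 :=
    Primrec.fst.comp (Primrec.unpair.comp hp)
  have hp2 : Primrec fun q : Unit × List Bool => q.2.length.unpair.2.unpair.2 :=
    Primrec.snd.comp (Primrec.unpair.comp hp)
  have heq : ∀ c : ℕ, PrimrecPred fun q : Unit × List Bool => q.2.length.unpair.1 = c :=
    fun c => Primrec.eq.comp ht (Primrec.const c)
  refine Primrec.ite (heq 0) (Primrec.const _) ?_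
  refine Primrec.ite (heq 1) ?_ ?_
  · exact Primrec.option_some.comp
      ((Primrec.eq.comp hp (Primrec.const 0)).decide)
  refine Primrec.ite (heq 2) (Primrec.list_getElem?.comp hl hp) ?_
  refine Primrec.ite (((heq 3).or (heq 4)).or (heq 5) |>.of_eq fun q => by tauto) ?_ ?_
  · refine Primrec.option_bind (Primrec.list_getElem?.comp hl hp1) ?_
    refine Primrec.option_map
      (Primrec.list_getElem?.comp (hl.comp Primrec.fst) (hp2.comp Primrec.fst)) ?_
    exact (Primrec.dom_bool₂ (· && ·)).comp (Primrec.snd.comp Primrec.fst) Primrec.snd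
  refine Primrec.ite ((heq 6).or (heq 7)) (Primrec.list_getElem?.comp hl hp2)
    (Primrec.const _)

theorem isCode_computable : Computable isCode := by
  have h : Primrec₂ fun (_ : Unit) (n : ℕ) => isCode n :=
    Primrec.nat_strong_rec _ isCodeStep_primrec isCodeStep_spec
  exact (h.comp (Primrec.const ()) Primrec.id).to_comp

/-- if the classical first-order logic of one binary predicate is
undecidable and there is a computable, truth-preserving two-way reduction
`φ ↦ φ*` (Kripke's trick) into the monadic fragment `L` of a modal predicate logic
with `QK ⊆ L ⊆ QS5` (here `LC` is the set of codes of members of `L`), then the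
monadic fragment of `L` is undecidable. -/
theorem kripke_trick_undecidability
    (hVal : ¬ ComputablePred (fun n : ℕ => ∃ φ : FOF, encodeFOF φ = n ∧ FOValid φ))
    (LC : Set ℕ)
    (hQK : ∀ ψ : MFor, QKValid ψ → encodeMFor ψ ∈ LC)
    (hQS5 : ∀ n ∈ LC, ∃ ψ : MFor, encodeMFor ψ = n ∧ QS5Valid ψ)
    (f : ℕ → ℕ) (hf : Computable f)
    (hred : ∀ φ : FOF, FOValid φ ↔ f (encodeFOF φ) ∈ LC) :
    ¬ ComputablePred (· ∈ LC) := by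
  intro hLC
  apply hVal
  obtain ⟨g, hg, hgspec⟩ := ComputablePred.computable_iff.1 hLC
  apply ComputablePred.computable_iff.2
  refine ⟨fun n => isCode n && g (f n), ?_, ?_⟩
  · exact (Computable.cond isCode_computable (hg.comp hf) (Computable.const false)).of_eq
      fun n => by cases isCode n <;> simp
  · funext n
    apply propext
    have hmem : ∀ m, m ∈ LC ↔ g m = true := fun m => by
      have := congrFun hgspec m; simpa using this
    simp only [Bool.and_eq_true]
    constructor
    · rintro ⟨φ, rfl, hv⟩
      exact ⟨isCode_encode φ, (hmem _).1 ((hred φ).1 hv)⟩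
    · rintro ⟨hc, hfc⟩
      obtain ⟨φ, rfl⟩ := (isCode_iff n).1 hc
      exact ⟨φ, rfl, (hred φ).2 ((hmem _).2 hfc)⟩
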